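/- arXiv:2111.15042 — 8 statements merged into one kernel-verified Lean document; each statement's English description precedes it below -/
import Mathlib

section
/- For the binary asymmetric channel with crossover probabilities p₀ ∈ (0,1/2) and p₁ ∈ [p₀, 1-p₀], the KL divergence from the output distribution given input 1 to that given input 0 is at least the KL divergence from the output distribution given input 0 to that given input 1; i.e., D([p₁, 1-p₁] ‖ [1-p₀, p₀]) ≥ D([1-p₀, p₀] ‖ [p₁, 1-p₁]). -/
open Real Set

/-!
With `b = 1 - p₀` and `g x = D(x ‖ b) - D(b ‖ x)` for binary divergences, one computes
`g'' x = (x - b) (1 - 2x) / (x (1 - x))²`. So `g` is convex on `[1/2, b]`, where `g b = g' b = 0`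
forces `g ≥ 0`, and concave on `[1 - b, 1/2]`, where it lies above `min (g (1 - b)) (g (1/2))`.
Here `g (1/2) ≥ 0` by the convex case and `g (1 - b) = 0` by the symmetry `D(1-p ‖ 1-q) = D(p ‖ q)`.
-/

noncomputable def binaryKL (p q : ℝ) : ℝ :=
  p * log (p / q) + (1 - p) * log ((1 - p) / (1 - q))

lemma binaryKL_one_sub_one_sub (p q : ℝ) : binaryKL (1 - p) (1 - q) = binaryKL p q := by
  simp only [binaryKL, sub_sub_cancel]
  ring

section Asymmetry

variable {b x : ℝ}

lemma hasDerivAt_binaryKL_sub_binaryKL (hb0 : 0 < b) (hb1 : b < 1) (hx0 : 0 < x) (hx1 : x < 1) :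
    HasDerivAt (fun y ↦ binaryKL y b - binaryKL b y)
      (log (x / b) - log ((1 - x) / (1 - b)) + b / x - (1 - b) / (1 - x)) x := by
  have h1x : 1 - x ≠ 0 := by linarith
  have h1b : 1 - b ≠ 0 := by linarith
  have hsub : HasDerivAt (fun y : ℝ ↦ 1 - y) (-1) x := by
    simpa using (hasDerivAt_id x).const_sub 1
  have hl1 := ((hasDerivAt_id' x).div_const b).log (by positivity)
  have hl2 := (hsub.div_const (1 - b)).log (div_ne_zero h1x h1b)
  have hl3 := ((hasDerivAt_const x b).div (hasDerivAt_id' x) hx0.ne').log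
    (div_ne_zero hb0.ne' hx0.ne')
  have hl4 := ((hasDerivAt_const x (1 - b)).div hsub h1x).log (div_ne_zero h1b h1x)
  have := (((hasDerivAt_id' x).mul hl1).add (hsub.mul hl2)).sub
    ((hl3.const_mul b).add (hl4.const_mul (1 - b)))
  refine this.congr_deriv ?_
  simp only [Pi.div_apply]
  field_simp
  ring

lemma hasDerivAt_binaryKL_sub_binaryKL_deriv (hb0 : 0 < b) (hb1 : b < 1) (hx0 : 0 < x)
    (hx1 : x < 1) :
    HasDerivAt (fun y ↦ log (y / b) - log ((1 - y) / (1 - b)) + b / y - (1 - b) / (1 - y))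
      ((x - b) * (1 - 2 * x) / (x ^ 2 * (1 - x) ^ 2)) x := by
  have h1x : 1 - x ≠ 0 := by linarith
  have h1b : 1 - b ≠ 0 := by linarith
  have hsub : HasDerivAt (fun y : ℝ ↦ 1 - y) (-1) x := by
    simpa using (hasDerivAt_id x).const_sub 1
  have hl1 := ((hasDerivAt_id' x).div_const b).log (by positivity)
  have hl2 := (hsub.div_const (1 - b)).log (div_ne_zero h1x h1b)
  have := ((hl1.sub hl2).add ((hasDerivAt_const x b).div (hasDerivAt_id' x) hx0.ne')).sub
    ((hasDerivAt_const x (1 - b)).div hsub h1x)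
  refine this.congr_deriv ?_
  field_simp
  ring

lemma convexOn_binaryKL_sub_binaryKL (hb1 : b < 1) :
    ConvexOn ℝ (Icc (1 / 2) b) (fun y ↦ binaryKL y b - binaryKL b y) := by
  refine convexOn_of_hasDerivWithinAt2_nonneg (convex_Icc _ _)
    (f' := fun y ↦ log (y / b) - log ((1 - y) / (1 - b)) + b / y - (1 - b) / (1 - y))
    (f'' := fun y ↦ (y - b) * (1 - 2 * y) / (y ^ 2 * (1 - y) ^ 2))
    (fun y hy ↦ (hasDerivAt_binaryKL_sub_binaryKL (by linarith [hy.1, hy.2]) hb1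
      (by linarith [hy.1]) (by linarith [hy.2])).continuousAt.continuousWithinAt)
    (fun y hy ↦ ?_) (fun y hy ↦ ?_) (fun y hy ↦ ?_) <;>
  rw [interior_Icc] at hy <;> obtain ⟨hy0, hyb⟩ := hy
  · exact (hasDerivAt_binaryKL_sub_binaryKL (by linarith) hb1 (by linarith)
      (by linarith)).hasDerivWithinAt
  · exact (hasDerivAt_binaryKL_sub_binaryKL_deriv (by linarith) hb1 (by linarith)
      (by linarith)).hasDerivWithinAt
  · exact div_nonneg (mul_nonneg_of_nonpos_of_nonpos (by linarith) (by linarith)) (by positivity)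

lemma concaveOn_binaryKL_sub_binaryKL (hb : 1 / 2 ≤ b) (hb1 : b < 1) :
    ConcaveOn ℝ (Icc (1 - b) (1 / 2)) (fun y ↦ binaryKL y b - binaryKL b y) := by
  refine concaveOn_of_hasDerivWithinAt2_nonpos (convex_Icc _ _)
    (f' := fun y ↦ log (y / b) - log ((1 - y) / (1 - b)) + b / y - (1 - b) / (1 - y))
    (f'' := fun y ↦ (y - b) * (1 - 2 * y) / (y ^ 2 * (1 - y) ^ 2))
    (fun y hy ↦ (hasDerivAt_binaryKL_sub_binaryKL (by linarith) hb1
      (by linarith [hy.1]) (by linarith [hy.2])).continuousAt.continuousWithinAt)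
    (fun y hy ↦ ?_) (fun y hy ↦ ?_) (fun y hy ↦ ?_) <;>
  rw [interior_Icc] at hy <;> obtain ⟨hy0, hyb⟩ := hy
  · exact (hasDerivAt_binaryKL_sub_binaryKL (by linarith) hb1 (by linarith)
      (by linarith)).hasDerivWithinAt
  · exact (hasDerivAt_binaryKL_sub_binaryKL_deriv (by linarith) hb1 (by linarith)
      (by linarith)).hasDerivWithinAt
  · exact div_nonpos_of_nonpos_of_nonneg (mul_nonpos_of_nonpos_of_nonneg (by linarith)
      (by linarith)) (by positivity)

lemma binaryKL_le_binaryKL_of_half_le (hb1 : b < 1) (hx : x ∈ Icc (1 / 2) b) :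
    binaryKL b x ≤ binaryKL x b := by
  obtain rfl | hxb := hx.2.eq_or_lt
  · exact le_rfl
  have hslope := (convexOn_binaryKL_sub_binaryKL hb1).slope_le_of_hasDerivAt hx
    ⟨hx.1.trans hxb.le, le_rfl⟩ hxb
    (hasDerivAt_binaryKL_sub_binaryKL (by linarith [hx.1]) hb1 (by linarith [hx.1]) hb1)
  have hb0 : 0 < b := by linarith [hx.1]
  have hderiv : log (b / b) - log ((1 - b) / (1 - b)) + b / b - (1 - b) / (1 - b) = 0 := by
    rw [div_self hb0.ne', div_self (by linarith : 1 - b ≠ 0)]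
    simp
  rw [hderiv, slope_def_field, div_le_iff₀ (sub_pos.2 hxb)] at hslope
  linarith

lemma binaryKL_le_binaryKL_of_mem_Icc (hb1 : b < 1) (hx : x ∈ Icc (1 - b) b) :
    binaryKL b x ≤ binaryKL x b := by
  rcases le_total (1 / 2) x with hx2 | hx2
  · exact binaryKL_le_binaryKL_of_half_le hb1 ⟨hx2, hx.2⟩
  have hb : 1 / 2 ≤ b := by linarith [hx.1, hx.2]
  have hleft : binaryKL (1 - b) b - binaryKL b (1 - b) = 0 := by
    rw [← binaryKL_one_sub_one_sub b, sub_sub_cancel, sub_self]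
  have hmid := binaryKL_le_binaryKL_of_half_le hb1 ⟨le_rfl, hb⟩
  have := (concaveOn_binaryKL_sub_binaryKL hb hb1).min_le_of_mem_Icc
    ⟨le_rfl, by linarith⟩ ⟨by linarith, le_rfl⟩ ⟨hx.1, hx2⟩
  rw [hleft] at this
  linarith [(le_min le_rfl (sub_nonneg.2 hmid)).trans this]

end Asymmetry

theorem bac_kl_divergence_asymmetry_general
    (p₀ p₁ : ℝ) (h0 : 0 < p₀)
    (h1 : p₀ ≤ p₁) (h1' : p₁ ≤ 1 - p₀) :
    (1 - p₀) * Real.logb 2 ((1 - p₀) / p₁) + p₀ * Real.logb 2 (p₀ / (1 - p₁))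
      ≤ p₁ * Real.logb 2 (p₁ / (1 - p₀)) + (1 - p₁) * Real.logb 2 ((1 - p₁) / p₀) := by
  have hKL := binaryKL_le_binaryKL_of_mem_Icc (b := 1 - p₀) (x := p₁) (by linarith)
    ⟨by linarith, h1'⟩
  have hlhs : (1 - p₀) * logb 2 ((1 - p₀) / p₁) + p₀ * logb 2 (p₀ / (1 - p₁))
      = binaryKL (1 - p₀) p₁ / log 2 := by
    simp only [binaryKL, logb, sub_sub_cancel]
    ring
  have hrhs : p₁ * logb 2 (p₁ / (1 - p₀)) + (1 - p₁) * logb 2 ((1 - p₁) / p₀)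
      = binaryKL p₁ (1 - p₀) / log 2 := by
    simp only [binaryKL, logb, sub_sub_cancel]
    ring
  rw [hlhs, hrhs]
  exact div_le_div_of_nonneg_right hKL (log_pos one_lt_two).le

/-- For a regularized BAC(p₀,p₁), D(P(Y|X=1) ‖ P(Y|X=0)) ≥ D(P(Y|X=0) ‖ P(Y|X=1)). -/
theorem bac_kl_divergence_asymmetry
    (p₀ p₁ : ℝ) (h0 : 0 < p₀) (h0' : p₀ < 1/2)
    (h1 : p₀ ≤ p₁) (h1' : p₁ ≤ 1 - p₀) :
    (1 - p₀) * Real.logb 2 ((1 - p₀) / p₁) + p₀ * Real.logb 2 (p₀ / (1 - p₁))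
      ≤ p₁ * Real.logb 2 (p₁ / (1 - p₀)) + (1 - p₁) * Real.logb 2 ((1 - p₁) / p₀) :=
  bac_kl_divergence_asymmetry_general p₀ p₁ h0 h1 h1'
end

section
/- Let f : (0,1) → ℝ be convex on (0, 1/2], concave on [1/2, 1), and satisfy f(x) = -f(1-x) for all x ∈ (0,1). Then for all x, y ∈ (0,1) with x + y < 1, f(x) + f(y) ≥ 2·f((x+y)/2). -/
/-!
Antisymmetry forces `f (1/2) = 0`. If both points lie in `(0, 1/2]` the inequality is midpoint
convexity. Otherwise, say `x < 1/2 < y`, antisymmetry turns the claim into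
`2 f(m) + f(1 - y) ≤ f(x)` with `m = (x + y)/2`, where `x < m, 1 - y < 1/2`. Bounding `f(m)` and
`f(1 - y)` by the chord from `(x, f x)` to `(1/2, 0)` gives this, because the chord weights
`2 (1/2 - m) + (1/2 - (1 - y))` add up to `1/2 - x`.
-/

open Set

namespace ConvexOn

variable {s : Set ℝ} {f : ℝ → ℝ}

theorem two_mul_map_add_div_two_le (hf : ConvexOn ℝ s f) {x y : ℝ} (hx : x ∈ s) (hy : y ∈ s) :
    2 * f ((x + y) / 2) ≤ f x + f y := by
  have h := hf.2 hx hy (by norm_num : (0 : ℝ) ≤ 1 / 2) (by norm_num : (0 : ℝ) ≤ 1 / 2)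
    (by norm_num)
  simp only [smul_eq_mul] at h
  have hmid : 1 / 2 * x + 1 / 2 * y = (x + y) / 2 := by ring
  rw [hmid] at h
  linarith

theorem two_mul_map_add_div_two_add_map_reflect_le (hf : ConvexOn ℝ s f) {a c d : ℝ}
    (ha : a ∈ s) (hc : c ∈ s) (hfc : f c = 0) (hcd : c < d) (had : a + d < 2 * c) :
    2 * f ((a + d) / 2) + f (2 * c - d) ≤ f a := by
  have hm := hf.secant_mono_aux1 ha hc (y := (a + d) / 2) (by linarith) (by linarith)
  have hb := hf.secant_mono_aux1 ha hc (y := 2 * c - d) (by linarith) (by linarith)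
  rw [hfc] at hm hb
  have hsum : (c - a) * (2 * f ((a + d) / 2) + f (2 * c - d)) ≤ (c - a) * f a := by
    linarith
  exact le_of_mul_le_mul_left hsum (by linarith)

end ConvexOn

theorem midpoint_inequality_convex_concave_antisym_general
    (f : ℝ → ℝ)
    (hconv : ConvexOn ℝ (Set.Ioc (0:ℝ) (1/2)) f)
    (hanti : ∀ x ∈ Set.Ioo (0:ℝ) 1, f x = -f (1 - x))
    (x y : ℝ) (hx : x ∈ Set.Ioo (0:ℝ) 1) (hy : y ∈ Set.Ioo (0:ℝ) 1)
    (hxy : x + y < 1) :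
    2 * f ((x + y) / 2) ≤ f x + f y := by
  wlog hle : x ≤ y generalizing x y
  · have h := this y x hy hx (by linarith) (by linarith)
    rwa [add_comm y x, add_comm (f y)] at h
  have hhalf : f (1 / 2) = 0 := by
    have h := hanti (1 / 2) ⟨by norm_num, by norm_num⟩
    norm_num at h
    linarith
  have hx_mem : x ∈ Ioc (0 : ℝ) (1 / 2) := ⟨hx.1, by linarith⟩
  rcases le_or_gt y (1 / 2) with hy_le | hy_gt
  · exact hconv.two_mul_map_add_div_two_le hx_mem ⟨hy.1, hy_le⟩
  · have h := hconv.two_mul_map_add_div_two_add_map_reflect_le hx_mem ⟨by norm_num, le_rfl⟩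
      hhalf hy_gt (by linarith)
    have hfy := hanti y hy
    norm_num at h
    linarith

/-- If f is convex on (0,1/2], concave on [1/2,1), and satisfies f(x) = -f(1-x),
then f(x)+f(y) ≥ 2 f((x+y)/2) whenever x,y ∈ (0,1) and x+y < 1. -/
theorem midpoint_inequality_convex_concave_antisym
    (f : ℝ → ℝ)
    (hconv : ConvexOn ℝ (Set.Ioc (0:ℝ) (1/2)) f)
    (hconc : ConcaveOn ℝ (Set.Ico (1/2 : ℝ) 1) f)
    (hanti : ∀ x ∈ Set.Ioo (0:ℝ) 1, f x = -f (1 - x))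
    (x y : ℝ) (hx : x ∈ Set.Ioo (0:ℝ) 1) (hy : y ∈ Set.Ioo (0:ℝ) 1)
    (hxy : x + y < 1) :
    2 * f ((x + y) / 2) ≤ f x + f y :=
  midpoint_inequality_convex_concave_antisym_general f hconv hanti x y hx hy hxy
end

section
/- For 0 < p₀ < 1/2 and x ∈ [p₀, 1-p₀], the binary entropy function satisfies h(x) ≥ h(p₀) + (x - p₀)·log(1/((x+p₀)/2) - 1), where h(t) = -t·log t - (1-t)·log(1-t) and log is base 2. -/
open Real Set MeasureTheory

/-! In nats, `binEntropy x - binEntropy p` is the integral of `g t = log (1 - t) - log t` over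
`[p, x]`. Pairing `t` with `p + x - t`, it suffices that `g a + g b ≥ 2 g ((a + b) / 2)` whenever
`a + b ≤ 1` (convexity of `g` is not enough, as `g` is concave on `[1/2, 1)`). Exponentiated,
this reads `(1 - m)² a b ≤ (1 - a) (1 - b) m²` with `m = (a + b) / 2`, and the difference of the
two sides is `((a - b) / 2)² (1 - a - b)`. -/

theorem mul_le_integral_of_two_mul_le_add_reflect {f : ℝ → ℝ} {a b c : ℝ} (hab : a ≤ b)
    (hf : IntervalIntegrable f volume a b) (h : ∀ t ∈ Icc a b, 2 * c ≤ f t + f (a + b - t)) :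
    (b - a) * c ≤ ∫ t in a..b, f t := by
  have hf' : IntervalIntegrable (fun t => f (a + b - t)) volume a b := by
    simpa using (hf.comp_sub_left (a + b)).symm
  have hreflect : ∫ t in a..b, f (a + b - t) = ∫ t in a..b, f t := by
    simp [intervalIntegral.integral_comp_sub_left]
  have hmono := intervalIntegral.integral_mono_on hab intervalIntegrable_const (hf.add hf') h
  rw [intervalIntegral.integral_add hf hf', hreflect, intervalIntegral.integral_const,
    smul_eq_mul] at hmono
  linarith

theorem two_mul_log_one_sub_sub_log_midpoint_le {a b : ℝ} (ha : 0 < a) (hb : 0 < b)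
    (hab : a + b ≤ 1) :
    2 * (log (1 - (a + b) / 2) - log ((a + b) / 2)) ≤
      (log (1 - a) - log a) + (log (1 - b) - log b) := by
  set m := (a + b) / 2 with hm_def
  have hm : 0 < m := by positivity
  have h1m : 0 < 1 - m := by linarith
  have h1a : 0 < 1 - a := by linarith
  have h1b : 0 < 1 - b := by linarith
  have key : (1 - m) ^ 2 * (a * b) ≤ (1 - a) * (1 - b) * m ^ 2 := by
    rw [hm_def]; nlinarith [mul_nonneg (sq_nonneg (a - b)) (sub_nonneg.2 hab)]
  have hlog := log_le_log (by positivity) key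
  rw [log_mul (by positivity) (by positivity), log_mul ha.ne' hb.ne',
    log_mul (by positivity) (by positivity), log_mul h1a.ne' h1b.ne', log_pow, log_pow] at hlog
  push_cast at hlog
  linarith

theorem binEntropy_add_mul_deriv_midpoint_le {p x : ℝ} (hp : 0 < p) (hpx : p ≤ x)
    (hxp : x + p ≤ 1) :
    binEntropy p + (x - p) * (log (1 - (x + p) / 2) - log ((x + p) / 2)) ≤ binEntropy x := by
  have hderiv : ∀ t ∈ uIcc p x, HasDerivAt binEntropy (log (1 - t) - log t) t := by
    intro t ht
    rw [uIcc_of_le hpx] at ht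
    exact hasDerivAt_binEntropy (by linarith [ht.1]) (by linarith [ht.2])
  have hcont : ContinuousOn (fun t => log (1 - t) - log t) (uIcc p x) := by
    intro t ht
    rw [uIcc_of_le hpx] at ht
    have : t ≠ 0 := by linarith [ht.1]
    have : 1 - t ≠ 0 := by linarith [ht.2]
    fun_prop (disch := assumption)
  have hpair : ∀ t ∈ Icc p x, 2 * (log (1 - (x + p) / 2) - log ((x + p) / 2)) ≤
      (log (1 - t) - log t) + (log (1 - (p + x - t)) - log (p + x - t)) := by
    intro t ht
    have := two_mul_log_one_sub_sub_log_midpoint_le (a := t) (b := p + x - t)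
      (by linarith [ht.1]) (by linarith [ht.2]) (by linarith)
    rw [add_sub_cancel] at this
    rwa [add_comm x p]
  calc binEntropy p + (x - p) * (log (1 - (x + p) / 2) - log ((x + p) / 2))
      ≤ binEntropy p + ∫ t in p..x, log (1 - t) - log t := by
        gcongr
        exact mul_le_integral_of_two_mul_le_add_reflect hpx hcont.intervalIntegrable hpair
    _ = binEntropy x := by
        rw [intervalIntegral.integral_eq_sub_of_hasDerivAt hderiv hcont.intervalIntegrable]
        ring

theorem neg_mul_logb_sub_mul_logb_one_sub (b t : ℝ) :
    -t * logb b t - (1 - t) * logb b (1 - t) = binEntropy t / log b := by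
  simp only [binEntropy, logb, log_inv]
  ring

theorem logb_one_div_sub_one (b : ℝ) {m : ℝ} (hm0 : m ≠ 0) (hm1 : m ≠ 1) :
    logb b (1 / m - 1) = (log (1 - m) - log m) / log b := by
  rw [div_sub_one hm0, logb, log_div (sub_ne_zero.2 hm1.symm) hm0]

theorem binary_entropy_midpoint_tangent_bound_general
    (p₀ x : ℝ) (h0 : 0 < p₀)
    (hx : p₀ ≤ x) (hx' : x ≤ 1 - p₀) :
    (fun t : ℝ => -t * Real.logb 2 t - (1 - t) * Real.logb 2 (1 - t)) p₀
      + (x - p₀) * Real.logb 2 (1 / ((x + p₀) / 2) - 1)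
      ≤ (fun t : ℝ => -t * Real.logb 2 t - (1 - t) * Real.logb 2 (1 - t)) x := by
  simp only [neg_mul_logb_sub_mul_logb_one_sub]
  rw [logb_one_div_sub_one 2 (by linarith) (by linarith), mul_div_assoc', ← add_div,
    div_le_div_iff_of_pos_right (log_pos one_lt_two)]
  exact binEntropy_add_mul_deriv_midpoint_le h0 hx (by linarith)

/-- Binary entropy inequality: h(x) ≥ h(p₀) + (x-p₀)·log₂(1/((x+p₀)/2) - 1). -/
theorem binary_entropy_midpoint_tangent_bound
    (p₀ x : ℝ) (h0 : 0 < p₀) (h0' : p₀ < 1/2)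
    (hx : p₀ ≤ x) (hx' : x ≤ 1 - p₀) :
    (fun t : ℝ => -t * Real.logb 2 t - (1 - t) * Real.logb 2 (1 - t)) p₀
      + (x - p₀) * Real.logb 2 (1 / ((x + p₀) / 2) - 1)
      ≤ (fun t : ℝ => -t * Real.logb 2 t - (1 - t) * Real.logb 2 (1 - t)) x :=
  binary_entropy_midpoint_tangent_bound_general p₀ x h0 hx hx'
end

section
/- For a regularized binary asymmetric channel BAC(p₀, p₁) with 0 < p₀ < 1/2 and p₀ ≤ p₁ ≤ 1-p₀, the capacity-achieving input probability of symbol 0, given by π₀* = (1 - p₁(1+z)) / ((1-p₀-p₁)(1+z)) with z = 2^{(h(p₀)-h(p₁))/(1-p₀-p₁)} (when p₀+p₁ ≠ 1), satisfies 1/2 ≤ π₀* < 1. -/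
/-!
With `s = 1 - p₀ - p₁ > 0` and `z = exp ((H p₀ - H p₁) / s)` (`H` the natural-log binary entropy),
the bound `π₀ < 1` is equivalent to `p₀ / (1 - p₀) < z` and `1/2 ≤ π₀` to `z ≤ m / (1 - m)`,
where `m = (1 + p₀ - p₁) / 2` is the midpoint of `p₀` and `1 - p₁`. Since `H p₁ = H (1 - p₁)`,
both are statements about the secant of `H` over `[p₀, 1 - p₁]`: the first is strict concavity
(the secant lies below the tangent at `p₀`), the second says the secant slope is at least
`H' m`. Differentiating in the half-width `t`, this reduces to
`H' (m + t) + H' (m - t) ≥ 2 H' m` for `m ≤ 1/2`, which after exponentiating is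
`t² (1 - 2m) ≥ 0`.
-/

open Real

lemma binEntropy_lt_add_mul_log {u w : ℝ} (hu : 0 < u) (huw : u < w) (hw : w < 1) :
    binEntropy w < binEntropy u + (w - u) * (log (1 - u) - log u) := by
  have hslope := strictConcave_binEntropy.slope_lt_of_hasDerivAt
    ⟨hu.le, by linarith⟩ ⟨by linarith, hw.le⟩ huw
    (hasDerivAt_binEntropy hu.ne' (by linarith))
  rw [slope_def_field, div_lt_iff₀ (by linarith)] at hslope
  linarith

lemma two_mul_log_one_sub_sub_log_le {m t : ℝ} (ht : 0 ≤ t) (htm : t < m) (hm : m ≤ 1 / 2) :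
    2 * (log (1 - m) - log m) ≤
      (log (1 - (m + t)) - log (m + t)) + (log (1 - (m - t)) - log (m - t)) := by
  have h₁ : 0 < m - t := by linarith
  have h₂ : 0 < m + t := by linarith
  have h₃ : 0 < 1 - (m + t) := by linarith
  have h₄ : 0 < 1 - (m - t) := by linarith
  have h₅ : 0 < 1 - m := by linarith
  have h₆ : 0 < m := by linarith
  have hprod : ((1 - m) / m) ^ 2 ≤ (1 - (m + t)) / (m + t) * ((1 - (m - t)) / (m - t)) := by
    rw [div_pow, div_mul_div_comm, div_le_div_iff₀ (by positivity) (by positivity)]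
    nlinarith [mul_nonneg (sq_nonneg t) (by linarith : (0:ℝ) ≤ 1 - 2 * m)]
  have hlog := log_le_log (by positivity) hprod
  rw [log_pow, log_mul (by positivity) (by positivity), log_div h₅.ne' (by linarith),
    log_div h₃.ne' h₂.ne', log_div h₄.ne' h₁.ne'] at hlog
  push_cast at hlog
  linarith

lemma binEntropy_sub_binEntropy_le {m T : ℝ} (hT : 0 ≤ T) (hTm : T < m) (hm : m ≤ 1 / 2) :
    binEntropy (m - T) - binEntropy (m + T) ≤ 2 * T * (log m - log (1 - m)) := by
  set φ : ℝ → ℝ := fun t => binEntropy (m + t) - binEntropy (m - t) - 2 * t * (log (1 - m) - log m)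
  set φ' : ℝ → ℝ := fun t => (log (1 - (m + t)) - log (m + t))
    + (log (1 - (m - t)) - log (m - t)) - 2 * (log (1 - m) - log m)
  have hφ' : ∀ t ∈ Set.Ioo 0 T, HasDerivAt φ (φ' t) t := by
    intro t ⟨ht0, htT⟩
    have hplus := (hasDerivAt_binEntropy (p := m + t) (by linarith) (by linarith)).comp t
      ((hasDerivAt_id' t).const_add m)
    have hminus := (hasDerivAt_binEntropy (p := m - t) (by linarith) (by linarith)).comp t
      ((hasDerivAt_id' t).const_sub m)
    have hlin := ((hasDerivAt_id' t).const_mul 2).mul_const (log (1 - m) - log m)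
    exact ((hplus.sub hminus).sub hlin).congr_deriv (by ring)
  have hmono : MonotoneOn φ (Set.Icc 0 T) := by
    refine monotoneOn_of_hasDerivWithinAt_nonneg (f' := φ') (convex_Icc 0 T) (by fun_prop)
      (fun t ht => ?_) (fun t ht => ?_) <;> rw [interior_Icc] at ht
    · exact (hφ' t ht).hasDerivWithinAt
    · linarith [two_mul_log_one_sub_sub_log_le ht.1.le (ht.2.trans hTm) hm]
  have hφT := hmono ⟨le_rfl, hT⟩ ⟨hT, le_rfl⟩ hT
  simp only [φ, add_zero, sub_zero, mul_zero, zero_mul, sub_self] at hφT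
  linarith

lemma log_div_one_sub_lt_binEntropy_sub_div {p₀ p₁ : ℝ} (h0 : 0 < p₀) (h1 : 0 < p₁)
    (hs : p₀ + p₁ < 1) :
    log (p₀ / (1 - p₀)) < (binEntropy p₀ - binEntropy p₁) / (1 - p₀ - p₁) := by
  have htangent := binEntropy_lt_add_mul_log h0 (by linarith : p₀ < 1 - p₁) (by linarith)
  rw [binEntropy_one_sub] at htangent
  rw [log_div h0.ne' (by linarith), lt_div_iff₀ (by linarith)]
  linarith

lemma binEntropy_sub_div_le_log {p₀ p₁ : ℝ} (h0 : 0 < p₀) (h1 : p₀ ≤ p₁) (hs : p₀ + p₁ < 1) :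
    (binEntropy p₀ - binEntropy p₁) / (1 - p₀ - p₁) ≤ log ((1 + p₀ - p₁) / (1 - p₀ + p₁)) := by
  have hsecant := binEntropy_sub_binEntropy_le (m := (1 + p₀ - p₁) / 2) (T := (1 - p₀ - p₁) / 2)
    (by linarith) (by linarith) (by linarith)
  rw [show (1 + p₀ - p₁) / 2 - (1 - p₀ - p₁) / 2 = p₀ by ring,
    show (1 + p₀ - p₁) / 2 + (1 - p₀ - p₁) / 2 = 1 - p₁ by ring, binEntropy_one_sub,
    show 1 - (1 + p₀ - p₁) / 2 = (1 - p₀ + p₁) / 2 by ring,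
    log_div (by linarith) two_ne_zero, log_div (by linarith) two_ne_zero] at hsecant
  rw [log_div (by linarith) (by linarith), div_le_iff₀ (by linarith)]
  linarith

theorem bac_capacity_achieving_pi0_bounds_general
    (p₀ p₁ : ℝ) (h0 : 0 < p₀)
    (h1 : p₀ ≤ p₁) (h1' : p₁ ≤ 1 - p₀) (hne : p₀ + p₁ ≠ 1) :
    let h : ℝ → ℝ := fun t => -t * Real.logb 2 t - (1 - t) * Real.logb 2 (1 - t)
    let z : ℝ := 2 ^ ((h p₀ - h p₁) / (1 - p₀ - p₁))
    let π₀ : ℝ := (1 - p₁ * (1 + z)) / ((1 - p₀ - p₁) * (1 + z))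
    1/2 ≤ π₀ ∧ π₀ < 1 := by
  intro h z π₀
  have hs : p₀ + p₁ < 1 := lt_of_le_of_ne (by linarith) hne
  have hz : z = exp ((binEntropy p₀ - binEntropy p₁) / (1 - p₀ - p₁)) := by
    have hlog2 : log 2 ≠ 0 := (log_pos one_lt_two).ne'
    simp only [z, h, rpow_def_of_pos two_pos, logb, binEntropy, log_inv]
    congr 1
    field_simp
    ring
  have hz_lower : p₀ / (1 - p₀) < z := by
    rw [hz, ← log_lt_iff_lt_exp (div_pos h0 (by linarith))]
    exact log_div_one_sub_lt_binEntropy_sub_div h0 (by linarith) hs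
  have hz_upper : z ≤ (1 + p₀ - p₁) / (1 - p₀ + p₁) := by
    rw [hz, ← le_log_iff_exp_le (div_pos (by linarith) (by linarith))]
    exact binEntropy_sub_div_le_log h0 h1 hs
  have hz_pos : 0 < z := hz ▸ exp_pos _
  have hden : 0 < (1 - p₀ - p₁) * (1 + z) := mul_pos (by linarith) (by linarith)
  rw [div_lt_iff₀ (by linarith)] at hz_lower
  rw [le_div_iff₀ (by linarith)] at hz_upper
  constructor
  · rw [le_div_iff₀ hden]
    nlinarith
  · rw [div_lt_one hden]
    nlinarith

/-- For a regularized BAC(p₀,p₁), the capacity-achieving input probability of symbol 0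
satisfies 1/2 ≤ π₀* < 1. -/
theorem bac_capacity_achieving_pi0_bounds
    (p₀ p₁ : ℝ) (h0 : 0 < p₀) (h0' : p₀ < 1/2)
    (h1 : p₀ ≤ p₁) (h1' : p₁ ≤ 1 - p₀) (hne : p₀ + p₁ ≠ 1) :
    let h : ℝ → ℝ := fun t => -t * Real.logb 2 t - (1 - t) * Real.logb 2 (1 - t)
    let z : ℝ := 2 ^ ((h p₀ - h p₁) / (1 - p₀ - p₁))
    let π₀ : ℝ := (1 - p₁ * (1 + z)) / ((1 - p₀ - p₁) * (1 + z))
    1/2 ≤ π₀ ∧ π₀ < 1 :=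
  bac_capacity_achieving_pi0_bounds_general p₀ p₁ h0 h1 h1' hne
end

section
/- Fix p ∈ (0, 1/2), q = 1-p, n ≥ 2, and Δ₀ ∈ ℝ. Suppose reals v₀, v₁, ..., v_{n-1} satisfy: v_{n-1} = 1 + p·v_{n-2}, v_i = 1 + p·v_{i-1} + q·v_{i+1} for 1 ≤ i ≤ n-2, and v₀ = q + p·v₀ + q·v₁ + p·Δ₀. Then v₀ = n/(1-2p) + (p/(1-2p))·(1 - (p/q)^n)·(Δ₀ - 2q/(1-2p)). -/
/-- Solution of the first-passage-time node equations for the generalized Markov chain. -/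
theorem first_passage_node_equations_solution
    (p : ℝ) (hp : 0 < p) (hp' : p < 1/2) (n : ℕ) (hn : 2 ≤ n)
    (Δ₀ : ℝ) (v : ℕ → ℝ)
    (htop : v (n - 1) = 1 + p * v (n - 2))
    (hmid : ∀ i : ℕ, 1 ≤ i → i ≤ n - 2 → v i = 1 + p * v (i - 1) + (1 - p) * v (i + 1))
    (hbot : v 0 = (1 - p) + p * v 0 + (1 - p) * v 1 + p * Δ₀) :
    v 0 = n / (1 - 2 * p)
      + (p / (1 - 2 * p)) * (1 - (p / (1 - p)) ^ n) * (Δ₀ - 2 * (1 - p) / (1 - 2 * p)) := by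
  have hq : (0:ℝ) < 1 - p := by linarith
  have hq' : (1 - p : ℝ) ≠ 0 := ne_of_gt hq
  have h2 : (0:ℝ) < 1 - 2 * p := by linarith
  have h2' : (1 - 2 * p : ℝ) ≠ 0 := ne_of_gt h2
  set r : ℝ := p / (1 - p) with hr
  have hr1 : r < 1 := by rw [hr, div_lt_one hq]; linarith
  have hrne : r ≠ 1 := ne_of_lt hr1
  set E : ℝ := 1 / (1 - 2 * p) with hE
  set A : ℝ := (p / (1 - p)) * (Δ₀ - 2 * (1 - p) / (1 - 2 * p)) with hA
  -- Step 1: closed form for successive differences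
  have E1 : ∀ i, i ≤ n - 2 → v i - v (i + 1) = E + r ^ i * A := by
    intro i
    induction i with
    | zero =>
      intro _
      refine mul_left_cancel₀ hq' ?_
      have e : (1 - p) * (E + r ^ 0 * A) = (1 - p) + p * Δ₀ := by
        rw [hE, hA]; field_simp [hq', show (1 - p * 2 : ℝ) ≠ 0 by linarith]; ring
      rw [e]; linear_combination hbot
    | succ i ih =>
      intro h
      have ihk := ih (by omega)
      have hm := hmid (i + 1) (by omega) h
      simp only [Nat.add_sub_cancel] at hm
      refine mul_left_cancel₀ hq' ?_
      have e : (1 - p) * (E + r ^ (i + 1) * A) = 1 + p * (E + r ^ i * A) := by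
        rw [hE, pow_succ, hr]; field_simp [hq', show (1 - p * 2 : ℝ) ≠ 0 by linarith]; ring
      rw [e, ← ihk]; linear_combination hm
  -- Step 2: value at the last node
  have vlast : v (n - 1) = E + r ^ (n - 1) * A := by
    have e := E1 (n - 2) le_rfl
    have hx : n - 2 + 1 = n - 1 := by omega
    rw [hx] at e
    refine mul_left_cancel₀ hq' ?_
    have expand : (1 - p) * (E + r ^ (n - 1) * A) = 1 + p * (E + r ^ (n - 2) * A) := by
      have h12 : n - 1 = (n - 2) + 1 := by omega
      rw [h12, pow_succ, hE, hr]; field_simp [hq', show (1 - p * 2 : ℝ) ≠ 0 by linarith]; ring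
    rw [expand, ← e]; linear_combination htop
  -- Step 3: downward telescoping
  have V : ∀ k, k ≤ n - 1 → v (n - 1 - k)
      = ((k : ℝ) + 1) * E + A * r ^ (n - 1 - k) * (∑ t ∈ Finset.range (k + 1), r ^ t) := by
    intro k
    induction k with
    | zero =>
      intro _
      rw [Finset.sum_range_one]
      simp only [Nat.sub_zero, pow_zero, Nat.cast_zero]
      rw [vlast]; ring
    | succ k ih =>
      intro h
      have ihk := ih (by omega)
      have hm1 : n - 1 - (k + 1) + 1 = n - 1 - k := by omega
      have e := E1 (n - 1 - (k + 1)) (by omega)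
      rw [hm1] at e
      have hpow : r ^ (n - 1 - k) = r ^ (n - 1 - (k + 1)) * r := by
        rw [← hm1, pow_succ]
      rw [hpow] at ihk
      rw [geom_sum_succ]
      push_cast
      linear_combination e + ihk
  have hfin := V (n - 1) le_rfl
  simp only [Nat.sub_self] at hfin
  have hn1 : n - 1 + 1 = n := by omega
  rw [hn1, geom_sum_eq hrne] at hfin
  have h2'' : (2 * p - 1 : ℝ) ≠ 0 := by intro h; apply h2'; linarith
  have hc : ((n - 1 : ℕ) : ℝ) = (n : ℝ) - 1 := by
    have h1n : (1:ℕ) ≤ n := by omega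
    push_cast [h1n]; ring
  rw [hc, pow_zero] at hfin
  have hrdiff : r - 1 = (2 * p - 1) / (1 - p) := by
    rw [hr]; field_simp; ring
  have key : ∀ X : ℝ, A * 1 * ((X - 1) / (r - 1))
      = (p / (1 - 2 * p)) * (1 - X) * (Δ₀ - 2 * (1 - p) / (1 - 2 * p)) := by
    intro X
    rw [hrdiff, div_div_eq_mul_div, hA]
    field_simp [hq', show (1 - p * 2 : ℝ) ≠ 0 by linarith, h2'', show (p * 2 - 1 : ℝ) ≠ 0 by linarith]
    ring
  rw [hfin, hE]
  linear_combination key (r ^ n)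
end

section
/- Let λ ∈ (0,1] and let ρ = (ρ₁, ..., ρ_M) be a vector of strictly positive reals summing to 1 with max_i ρ_i < λ/(1+λ). Define, for S ⊆ {1,...,M}, π₀(S) = Σ_{i∈S} ρ_i and π₁(S) = 1 - π₀(S), and the objective f(S) = λ(π₁(S) - λπ₀(S)) if π₁(S) ≥ λπ₀(S), and f(S) = λπ₀(S) - π₁(S) otherwise. Then any minimizer S₀* of f over all subsets of {1,...,M} satisfies -min_{i∉S₀*} ρ_i ≤ λπ₀(S₀*) - π₁(S₀*) ≤ λ·min_{i∈S₀*} ρ_i, where the minimum over an empty set is taken as +∞ (so the corresponding constraint is vacuous). -/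
/-!
Write `d(S) = λπ₀(S) - π₁(S)`; the objective is `max (d, -λd)`. Adding an index `j ∉ S` raises `d`
by `(1 + λ)ρ_j` and removing `j ∈ S` lowers it by the same amount. If `d(S₀) < -ρ_j` for some
`j ∉ S₀`, adding `j` strictly decreases the objective; if `d(S₀) > λρ_j` for some `j ∈ S₀`,
removing `j` does. A minimizer therefore admits neither.
-/

open Finset

def gapCost (lam x : ℝ) : ℝ := max x (-(lam * x))

lemma ite_eq_gapCost {lam p : ℝ} (hlam : 0 < lam) :
    (if (1 - p) ≥ lam * p then lam * ((1 - p) - lam * p) else lam * p - (1 - p)) =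
      gapCost lam (lam * p - (1 - p)) := by
  unfold gapCost
  split_ifs with h
  · rw [max_eq_right (by nlinarith)]; ring
  · rw [max_eq_left (by nlinarith)]

lemma gapCost_add_lt {lam r x : ℝ} (hlam : 0 < lam) (hr : 0 < r) (hx : x < -r) :
    gapCost lam (x + (1 + lam) * r) < gapCost lam x :=
  max_lt (lt_max_of_lt_right (by nlinarith)) (lt_max_of_lt_right (by nlinarith [mul_pos hlam hr]))

lemma gapCost_sub_lt {lam r x : ℝ} (hlam : 0 < lam) (hr : 0 < r) (hx : lam * r < x) :
    gapCost lam (x - (1 + lam) * r) < gapCost lam x :=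
  max_lt (lt_max_of_lt_left (by nlinarith)) (lt_max_of_lt_left (by nlinarith))

section Gap

variable {ι : Type*} [DecidableEq ι] (lam : ℝ) (ρ : ι → ℝ)

def gap (S : Finset ι) : ℝ := lam * ∑ i ∈ S, ρ i - (1 - ∑ i ∈ S, ρ i)

lemma gap_insert {S : Finset ι} {j : ι} (hj : j ∉ S) :
    gap lam ρ (insert j S) = gap lam ρ S + (1 + lam) * ρ j := by
  simp only [gap, sum_insert hj]; ring

lemma gap_erase {S : Finset ι} {j : ι} (hj : j ∈ S) :
    gap lam ρ (S.erase j) = gap lam ρ S - (1 + lam) * ρ j := by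
  simp only [gap, ← add_sum_erase S ρ hj]; ring

end Gap

theorem sed_minimizer_satisfies_sed_condition_general
    (M : ℕ) (lam : ℝ) (hlam : 0 < lam)
    (ρ : Fin M → ℝ) (hpos : ∀ i, 0 < ρ i)
    (f : Finset (Fin M) → ℝ)
    (hf : ∀ S : Finset (Fin M),
      f S = if (1 - ∑ i ∈ S, ρ i) ≥ lam * ∑ i ∈ S, ρ i
        then lam * ((1 - ∑ i ∈ S, ρ i) - lam * ∑ i ∈ S, ρ i)
        else lam * ∑ i ∈ S, ρ i - (1 - ∑ i ∈ S, ρ i))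
    (S₀ : Finset (Fin M)) (hmin : ∀ S : Finset (Fin M), f S₀ ≤ f S) :
    (∀ hne : S₀ᶜ.Nonempty,
        -(S₀ᶜ.inf' hne ρ) ≤ lam * (∑ i ∈ S₀, ρ i) - (1 - ∑ i ∈ S₀, ρ i))
    ∧ (∀ hne : S₀.Nonempty,
        lam * (∑ i ∈ S₀, ρ i) - (1 - ∑ i ∈ S₀, ρ i) ≤ lam * S₀.inf' hne ρ) := by
  have hcost (S : Finset (Fin M)) : f S = gapCost lam (gap lam ρ S) :=
    (hf S).trans (ite_eq_gapCost hlam)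
  constructor
  · intro hne
    obtain ⟨j, hj, hρj⟩ := S₀ᶜ.exists_mem_eq_inf' hne ρ
    rw [hρj]
    by_contra! hgap
    have hadd := hmin (insert j S₀)
    rw [hcost, hcost, gap_insert lam ρ (mem_compl.mp hj)] at hadd
    exact (gapCost_add_lt hlam (hpos j) hgap).not_ge hadd
  · intro hne
    obtain ⟨j, hj, hρj⟩ := S₀.exists_mem_eq_inf' hne ρ
    rw [hρj]
    by_contra! hgap
    have hremove := hmin (S₀.erase j)
    rw [hcost, hcost, gap_erase lam ρ hj] at hremove
    exact (gapCost_sub_lt hlam (hpos j) hgap).not_ge hremove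

/-- Any minimizer of the weighted-difference objective satisfies the SED condition. -/
theorem sed_minimizer_satisfies_sed_condition
    (M : ℕ) (lam : ℝ) (hlam : 0 < lam) (hlam' : lam ≤ 1)
    (ρ : Fin M → ℝ) (hpos : ∀ i, 0 < ρ i)
    (hsum : ∑ i, ρ i = 1)
    (hmax : ∀ i, ρ i < lam / (1 + lam))
    (f : Finset (Fin M) → ℝ)
    (hf : ∀ S : Finset (Fin M),
      f S = if (1 - ∑ i ∈ S, ρ i) ≥ lam * ∑ i ∈ S, ρ i
        then lam * ((1 - ∑ i ∈ S, ρ i) - lam * ∑ i ∈ S, ρ i)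
        else lam * ∑ i ∈ S, ρ i - (1 - ∑ i ∈ S, ρ i))
    (S₀ : Finset (Fin M)) (hmin : ∀ S : Finset (Fin M), f S₀ ≤ f S) :
    (∀ hne : S₀ᶜ.Nonempty,
        -(S₀ᶜ.inf' hne ρ) ≤ lam * (∑ i ∈ S₀, ρ i) - (1 - ∑ i ∈ S₀, ρ i))
    ∧ (∀ hne : S₀.Nonempty,
        lam * (∑ i ∈ S₀, ρ i) - (1 - ∑ i ∈ S₀, ρ i) ≤ lam * S₀.inf' hne ρ) :=
  sed_minimizer_satisfies_sed_condition_general M lam hlam ρ hpos f hf S₀ hmin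
end

section
/- Let λ ∈ (0,1] and ρ₁ ≥ ρ₂ ≥ ... ≥ ρ_M > 0 be positive reals. Define sequences by S₀-sums a_s and S₁-sums b_s: a₁ = ρ₁, b₁ = 0, and for s ≥ 2, if b_{s-1} ≥ λ·a_{s-1} then a_s = a_{s-1} + ρ_s, b_s = b_{s-1}; otherwise a_s = a_{s-1}, b_s = b_{s-1} + ρ_s. Then for every s ∈ {1,...,M}, -m₁(s) ≤ λ·a_s - b_s ≤ λ·m₀(s), where m₀(s) is the minimum ρ_j among indices assigned to the first group up to step s and m₁(s) is the minimum among indices assigned to the second group (taken as +∞ if that group is empty). -/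
/-!
Write `D = λ a - b` for the weighted imbalance of the two groups. The new element `x` is never
larger than anything placed before it, so it becomes the minimum of the group it joins. If
`D ≤ 0` it joins the first group and `D` rises by `λ ρ x`, to at most `λ ρ x`; if `D > 0` it joins
the second group and `D` drops by `ρ x`, to more than `-ρ x`. In either case the bound on the
side `x` joined is restored by the new minimum, and the other bound only improves.
-/

open Finset

section GreedyStep

variable {ι R : Type*} [CommRing R] [LinearOrder R]

def IsBalanced (lam : R) (ρ : ι → R) (A B : Finset ι) : Prop :=
  (∀ hne : B.Nonempty, -(B.inf' hne ρ) ≤ lam * ∑ i ∈ A, ρ i - ∑ i ∈ B, ρ i) ∧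
  (∀ hne : A.Nonempty, lam * ∑ i ∈ A, ρ i - ∑ i ∈ B, ρ i ≤ lam * A.inf' hne ρ)

variable [DecidableEq ι]

def IsGreedyStep (lam : R) (ρ : ι → R) (x : ι) (A B A' B' : Finset ι) : Prop :=
  if (∑ i ∈ B, ρ i) ≥ lam * ∑ i ∈ A, ρ i
  then A' = insert x A ∧ B' = B
  else A' = A ∧ B' = insert x B

variable {lam : R} {ρ : ι → R} {x : ι} {A B A' B' : Finset ι}

theorem IsGreedyStep.union_eq
    (h : IsGreedyStep lam ρ x A B A' B') : A' ∪ B' = insert x (A ∪ B) := by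
  unfold IsGreedyStep at h
  split_ifs at h <;> obtain ⟨rfl, rfl⟩ := h
  · exact insert_union _ _ _
  · exact union_insert _ _ _

variable [IsStrictOrderedRing R]

theorem IsBalanced.insert_left
    (hbal : IsBalanced lam ρ A B) (hlam : 0 ≤ lam) (hx : x ∉ A) (hρx : 0 ≤ ρ x)
    (hmin : ∀ j ∈ A, ρ x ≤ ρ j) (hbehind : lam * ∑ i ∈ A, ρ i ≤ ∑ i ∈ B, ρ i) :
    IsBalanced lam ρ (insert x A) B := by
  have hgain : 0 ≤ lam * ρ x := mul_nonneg hlam hρx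
  refine ⟨fun hne => ?_, fun hne => ?_⟩
  · have := hbal.1 hne
    rw [sum_insert hx]
    linarith
  · have hxmin : ρ x ≤ (insert x A).inf' hne ρ :=
      (le_inf'_iff _ _).2 ((forall_mem_insert _ _ _).2 ⟨le_rfl, hmin⟩)
    have := mul_le_mul_of_nonneg_left hxmin hlam
    rw [sum_insert hx]
    linarith

theorem IsBalanced.insert_right
    (hbal : IsBalanced lam ρ A B) (hx : x ∉ B) (hρx : 0 ≤ ρ x)
    (hmin : ∀ j ∈ B, ρ x ≤ ρ j) (hahead : ∑ i ∈ B, ρ i < lam * ∑ i ∈ A, ρ i) :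
    IsBalanced lam ρ A (insert x B) := by
  refine ⟨fun hne => ?_, fun hne => ?_⟩
  · have hxmin : ρ x ≤ (insert x B).inf' hne ρ :=
      (le_inf'_iff _ _).2 ((forall_mem_insert _ _ _).2 ⟨le_rfl, hmin⟩)
    rw [sum_insert hx]
    linarith
  · have := hbal.2 hne
    rw [sum_insert hx]
    linarith

theorem IsBalanced.of_isGreedyStep
    (hbal : IsBalanced lam ρ A B) (hstep : IsGreedyStep lam ρ x A B A' B') (hlam : 0 ≤ lam)
    (hx : x ∉ A ∪ B) (hρx : 0 ≤ ρ x) (hmin : ∀ j ∈ A ∪ B, ρ x ≤ ρ j) :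
    IsBalanced lam ρ A' B' := by
  rw [mem_union, not_or] at hx
  unfold IsGreedyStep at hstep
  split_ifs at hstep with hbehind <;> obtain ⟨rfl, rfl⟩ := hstep
  · exact hbal.insert_left hlam hx.1 hρx (fun j hj => hmin j (mem_union_left _ hj)) hbehind
  · exact hbal.insert_right hx.2 hρx (fun j hj => hmin j (mem_union_right _ hj)) (not_le.mp hbehind)

end GreedyStep

theorem greedy_sed_invariant_general
    (M : ℕ) (lam : ℝ) (hlam : 0 < lam)
    (ρ : ℕ → ℝ)
    (hpos : ∀ i, 1 ≤ i → i ≤ M → 0 < ρ i)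
    (hmono : ∀ i j, 1 ≤ i → i ≤ j → j ≤ M → ρ j ≤ ρ i)
    (A B : ℕ → Finset ℕ)
    (hA1 : A 1 = {1}) (hB1 : B 1 = ∅)
    (hstep : ∀ s, 2 ≤ s → s ≤ M →
      if (∑ i ∈ B (s - 1), ρ i) ≥ lam * ∑ i ∈ A (s - 1), ρ i
      then A s = insert s (A (s - 1)) ∧ B s = B (s - 1)
      else A s = A (s - 1) ∧ B s = insert s (B (s - 1))) :
    ∀ s, 1 ≤ s → s ≤ M →
      (∀ hne : (B s).Nonempty,
        -((B s).inf' hne ρ) ≤ lam * (∑ i ∈ A s, ρ i) - ∑ i ∈ B s, ρ i)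
      ∧ (∀ hne : (A s).Nonempty,
        lam * (∑ i ∈ A s, ρ i) - (∑ i ∈ B s, ρ i) ≤ lam * (A s).inf' hne ρ) := by
  suffices h : ∀ s, 1 ≤ s → s ≤ M → A s ∪ B s ⊆ Icc 1 s ∧ IsBalanced lam ρ (A s) (B s) from
    fun s hs hsM => (h s hs hsM).2
  intro s hs
  induction s, hs using Nat.le_induction with
  | base =>
    intro _
    refine ⟨by simp [hA1, hB1], fun hne => absurd hne (by simp [hB1]), fun _ => by simp [hA1, hB1]⟩
  | succ n hn ih =>
    intro hnM
    obtain ⟨hsupp, hbal⟩ := ih (by omega)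
    have hgreedy : IsGreedyStep lam ρ (n + 1) (A n) (B n) (A (n + 1)) (B (n + 1)) :=
      hstep (n + 1) (by omega) hnM
    refine ⟨?_, hbal.of_isGreedyStep hgreedy hlam.le ?_ (hpos _ (by omega) hnM).le ?_⟩
    · rw [hgreedy.union_eq]
      exact insert_subset (by simp) (hsupp.trans (Icc_subset_Icc_right n.le_succ))
    · exact fun h => by simpa using (mem_Icc.mp (hsupp h)).2
    · intro j hj
      have hj' := mem_Icc.mp (hsupp hj)
      exact hmono j (n + 1) hj'.1 (by omega) hnM

/-- Invariant of the greedy SED partitioning algorithm (Algorithm 2): at every step s,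
the weighted difference λ·a_s - b_s is sandwiched between -min ρ over the second group
and λ·min ρ over the first group. -/
theorem greedy_sed_invariant
    (M : ℕ) (hM : 1 ≤ M) (lam : ℝ) (hlam : 0 < lam) (hlam' : lam ≤ 1)
    (ρ : ℕ → ℝ)
    (hpos : ∀ i, 1 ≤ i → i ≤ M → 0 < ρ i)
    (hmono : ∀ i j, 1 ≤ i → i ≤ j → j ≤ M → ρ j ≤ ρ i)
    (A B : ℕ → Finset ℕ)
    (hA1 : A 1 = {1}) (hB1 : B 1 = ∅)
    (hstep : ∀ s, 2 ≤ s → s ≤ M →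
      if (∑ i ∈ B (s - 1), ρ i) ≥ lam * ∑ i ∈ A (s - 1), ρ i
      then A s = insert s (A (s - 1)) ∧ B s = B (s - 1)
      else A s = A (s - 1) ∧ B s = insert s (B (s - 1))) :
    ∀ s, 1 ≤ s → s ≤ M →
      (∀ hne : (B s).Nonempty,
        -((B s).inf' hne ρ) ≤ lam * (∑ i ∈ A s, ρ i) - ∑ i ∈ B s, ρ i)
      ∧ (∀ hne : (A s).Nonempty,
        lam * (∑ i ∈ A s, ρ i) - (∑ i ∈ B s, ρ i) ≤ lam * (A s).inf' hne ρ) :=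
  greedy_sed_invariant_general M lam hlam ρ hpos hmono A B hA1 hB1 hstep
end

section
/- Let P and Q be probability distributions on a finite set Y and α ∈ [0,1]. Then the map α ↦ D(P ‖ αP + (1-α)Q) is non-increasing in α on [0,1]. -/
/-!
For `α < 1` the mixture at `β` lies on the segment from `R = αP + (1-α)Q` to `P`:
`βP + (1-β)Q = tR + (1-t)P` with `t = (1-β)/(1-α) ∈ [0,1]`. Concavity of `log` gives, term by term,
`D(P ‖ tR + (1-t)P) ≤ t·D(P ‖ R)`, and Gibbs' inequality `D(P ‖ R) ≥ 0` gives `t·D(P ‖ R) ≤ D(P ‖ R)`.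
-/

open Finset

/-- KL divergence (base 2) between finitely supported distributions, valued in EReal,
with the conventions 0·log(0/a) = 0 and b·log(b/0) = ∞ for b ≠ 0. -/
noncomputable def klDivFin {Y : Type*} [Fintype Y] (P R : Y → ℝ) : EReal :=
  ∑ y, if P y = 0 then (0 : EReal)
    else if R y = 0 then (⊤ : EReal)
    else ((P y * Real.logb 2 (P y / R y) : ℝ) : EReal)

open Real

lemma sub_le_mul_log_div {p r : ℝ} (hp : 0 ≤ p) (hr : 0 ≤ r) (hpr : 0 < p → 0 < r) :
    p - r ≤ p * log (p / r) := by
  rcases hp.eq_or_lt with rfl | hp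
  · simpa using hr
  · calc p - r = p * (1 - (p / r)⁻¹) := by field_simp
      _ ≤ p * log (p / r) :=
        mul_le_mul_of_nonneg_left (one_sub_inv_le_log_of_pos (div_pos hp (hpr hp))) hp.le

lemma sum_mul_log_div_nonneg {ι : Type*} (s : Finset ι) {p r : ι → ℝ} (hp : ∀ i, 0 ≤ p i)
    (hr : ∀ i, 0 ≤ r i) (hpr : ∀ i, 0 < p i → 0 < r i) (hsum : ∑ i ∈ s, r i ≤ ∑ i ∈ s, p i) :
    0 ≤ ∑ i ∈ s, p i * log (p i / r i) :=
  calc 0 ≤ ∑ i ∈ s, (p i - r i) := by rw [sum_sub_distrib]; linarith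
    _ ≤ ∑ i ∈ s, p i * log (p i / r i) :=
      sum_le_sum fun i _ => sub_le_mul_log_div (hp i) (hr i) (hpr i)

lemma mul_log_div_convex_comb_le {p a t : ℝ} (hp : 0 ≤ p) (hpa : 0 < p → 0 < a)
    (ht0 : 0 ≤ t) (ht1 : t ≤ 1) :
    p * log (p / (t * a + (1 - t) * p)) ≤ t * (p * log (p / a)) := by
  rcases hp.eq_or_lt with rfl | hp
  · simp
  have ha := hpa hp
  have hmix : 0 < t * a + (1 - t) * p :=
    convex_Ioi (0 : ℝ) ha hp ht0 (sub_nonneg.2 ht1) (add_sub_cancel t 1)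
  have hconcave : t * log a + (1 - t) * log p ≤ log (t * a + (1 - t) * p) :=
    strictConcaveOn_log_Ioi.concaveOn.2 ha hp ht0 (sub_nonneg.2 ht1) (add_sub_cancel t 1)
  rw [log_div hp.ne' hmix.ne', log_div hp.ne' ha.ne']
  nlinarith [mul_le_mul_of_nonneg_left hconcave hp.le]

lemma klDivFin_eq_top {Y : Type*} [Fintype Y] {P R : Y → ℝ} {y : Y} (hPy : P y ≠ 0)
    (hRy : R y = 0) : klDivFin P R = ⊤ := by
  classical
  have hterm : ∀ z, (if P z = 0 then (0 : EReal) else if R z = 0 then ⊤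
      else ((P z * logb 2 (P z / R z) : ℝ) : EReal)) ≠ ⊥ := fun z => by
    split_ifs <;> simp [-EReal.coe_mul]
  rw [klDivFin, ← add_sum_erase _ _ (mem_univ y), if_neg hPy, if_pos hRy]
  exact EReal.top_add_of_ne_bot (WithBot.sum_lt_bot (M := WithTop ℝ) fun z _ => hterm z).ne'

lemma klDivFin_eq_coe {Y : Type*} [Fintype Y] {P R : Y → ℝ} (hPR : ∀ y, P y ≠ 0 → R y ≠ 0) :
    klDivFin P R = ((∑ y, P y * log (P y / R y)) / log 2 : ℝ) := by
  rw [klDivFin, sum_div]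
  refine .trans ?_ (map_sum (⟨⟨(↑), EReal.coe_zero⟩, EReal.coe_add⟩ : ℝ →+ EReal) _ _).symm
  refine sum_congr rfl fun y _ => ?_
  by_cases hPy : P y = 0
  · simp [hPy]
  · simp [hPy, hPR y hPy, logb, mul_div_assoc]

theorem klDivFin_convex_comb_self_le {Y : Type*} [Fintype Y] {P R : Y → ℝ} (hP : ∀ y, 0 ≤ P y)
    (hR : ∀ y, 0 ≤ R y) (hsum : ∑ y, R y ≤ ∑ y, P y) {t : ℝ} (ht0 : 0 ≤ t) (ht1 : t ≤ 1) :
    klDivFin P (fun y => t * R y + (1 - t) * P y) ≤ klDivFin P R := by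
  by_cases hPR : ∀ y, 0 < P y → 0 < R y
  · have hPmix : ∀ y, P y ≠ 0 → t * R y + (1 - t) * P y ≠ 0 := fun y hy =>
      have hPy := (hP y).lt_of_ne' hy
      (convex_Ioi (0 : ℝ) (hPR y hPy) hPy ht0 (sub_nonneg.2 ht1) (add_sub_cancel t 1)).ne'
    rw [klDivFin_eq_coe hPmix, klDivFin_eq_coe fun y hy => (hPR y ((hP y).lt_of_ne' hy)).ne',
      EReal.coe_le_coe_iff]
    refine div_le_div_of_nonneg_right ?_ (log_nonneg one_le_two)
    calc ∑ y, P y * log (P y / (t * R y + (1 - t) * P y))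
        ≤ ∑ y, t * (P y * log (P y / R y)) :=
          sum_le_sum fun y _ => mul_log_div_convex_comb_le (hP y) (hPR y) ht0 ht1
      _ = t * ∑ y, P y * log (P y / R y) := (mul_sum _ _ _).symm
      _ ≤ ∑ y, P y * log (P y / R y) :=
          mul_le_of_le_one_left (sum_mul_log_div_nonneg _ hP hR hPR hsum) ht1
  · push Not at hPR
    obtain ⟨y, hPy, hRy⟩ := hPR
    rw [klDivFin_eq_top hPy.ne' (le_antisymm hRy (hR y))]
    exact le_top

/-- D(P ‖ αP + (1-α)Q) is non-increasing in α on [0,1]. -/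
theorem klDiv_mixture_antitone
    {Y : Type*} [Fintype Y] (P Q : Y → ℝ)
    (hP : ∀ y, 0 ≤ P y) (hPsum : ∑ y, P y = 1)
    (hQ : ∀ y, 0 ≤ Q y) (hQsum : ∑ y, Q y = 1)
    (α β : ℝ) (hα : 0 ≤ α) (hβ : β ≤ 1) (hαβ : α ≤ β) :
    klDivFin P (fun y => β * P y + (1 - β) * Q y)
      ≤ klDivFin P (fun y => α * P y + (1 - α) * Q y) := by
  rcases (hαβ.trans hβ).eq_or_lt with rfl | hα1
  · obtain rfl : β = 1 := le_antisymm hβ hαβ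
    exact le_rfl
  have hsegment : (fun y => β * P y + (1 - β) * Q y) = fun y =>
      (1 - β) / (1 - α) * (α * P y + (1 - α) * Q y) + (1 - (1 - β) / (1 - α)) * P y := by
    funext y
    field_simp [(sub_pos.2 hα1).ne']
    ring
  rw [hsegment]
  refine klDivFin_convex_comb_self_le hP
    (fun y => add_nonneg (mul_nonneg hα (hP y)) (mul_nonneg (sub_pos.2 hα1).le (hQ y)))
    (by simp [sum_add_distrib, ← mul_sum, hPsum, hQsum])
    (div_nonneg (sub_nonneg.2 hβ) (sub_pos.2 hα1).le)
    (div_le_one_of_le₀ (by linarith) (sub_pos.2 hα1).le)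
end
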